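/- arXiv:2205.13466 — 4 statements merged into one kernel-verified Lean document; each statement's English description precedes it below -/
import Mathlib

section
/- Let X : S¹ × (0,T) → ℝ² be a smooth solution of the flow ∂X/∂t = (h(t) − κ)ν through embedded closed curves, and set θ(p,q,t) = ∫_p^q κ ds_t. Then θ satisfies the two-point heat equation ∂θ/∂t(p,q,t) = ∂²θ/∂s_q²(p,q,t) + ∂²θ/∂s_p²(p,q,t) (equivalently, ∂θ/∂t = ∂κ/∂s(q,t) − ∂κ/∂s(p,t)) for all p, q ∈ S¹ with p ≠ q and all t ∈ (0,T). -/
open Real Set MeasureTheory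

noncomputable section

/-- The Euclidean plane. -/
abbrev E2 : Type := EuclideanSpace ℝ (Fin 2)

/-- Rotation by minus 90 degrees: `(a, b) ↦ (b, -a)`. -/
def rot90 (u : E2) : E2 := WithLp.toLp 2 ![u 1, -u 0]

/-- Length element `v(p) = ‖∂X/∂p‖`. -/
def lenElem (X : ℝ → E2) (p : ℝ) : ℝ := ‖deriv X p‖

/-- Unit tangent vector `τ = v⁻¹ ∂X/∂p`. -/
def tvec (X : ℝ → E2) (p : ℝ) : E2 := (lenElem X p)⁻¹ • deriv X p

/-- Outward unit normal `ν = (τ₂, -τ₁)`. -/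
def nvec (X : ℝ → E2) (p : ℝ) : E2 := rot90 (tvec X p)

/-- Curvature `κ = -⟨∂τ/∂s, ν⟩`, where `∂/∂s = v⁻¹ ∂/∂p` is the arc-length derivative. -/
def curv (X : ℝ → E2) (p : ℝ) : ℝ :=
  -(inner ℝ ((lenElem X p)⁻¹ • deriv (tvec X) p) (nvec X p) : ℝ)

/-- Curvature vector `κ⃗ = -κ ν`. -/
def kvec (X : ℝ → E2) (p : ℝ) : E2 := (-(curv X p)) • nvec X p

/-- Local total curvature `θ(p,q) = ∫_p^q κ ds`. -/
def theta (X : ℝ → E2) (p q : ℝ) : ℝ := ∫ r in p..q, curv X r * lenElem X r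

/-- Intrinsic (arc-length) distance `l(p,q) = ∫_p^q ds`. -/
def arcl (X : ℝ → E2) (p q : ℝ) : ℝ := ∫ r in p..q, lenElem X r

/-- `∫_p^q κ² ds`. -/
def sqCurvInt (X : ℝ → E2) (p q : ℝ) : ℝ := ∫ r in p..q, (curv X r)^2 * lenElem X r

/-- Total length `L` of the (1-periodic) curve. -/
def clen (X : ℝ → E2) : ℝ := arcl X 0 1

/-- Extrinsic distance `d(p,q) = ‖X(q) - X(p)‖`. -/
def extd (X : ℝ → E2) (p q : ℝ) : ℝ := ‖X q - X p‖

/-- The unit vector `w = (X(q) - X(p))/d(p,q)`. -/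
def wvec (X : ℝ → E2) (p q : ℝ) : E2 := (extd X p q)⁻¹ • (X q - X p)

/-- `ψ(p,q) = (L/π) sin(π l(p,q)/L)`. -/
def psi (X : ℝ → E2) (p q : ℝ) : ℝ :=
  (clen X / π) * Real.sin (π * arcl X p q / clen X)

/-- A closed smooth regular curve, modelled as a 1-periodic map `ℝ → ℝ²`. -/
def IsClosedCurve (X : ℝ → E2) : Prop :=
  ContDiff ℝ (⊤ : ℕ∞) X ∧ Function.Periodic X 1 ∧ ∀ p, deriv X p ≠ 0

/-- Embeddedness: self-intersections only at parameters differing by a full period. -/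
def IsEmbedded (X : ℝ → E2) : Prop :=
  ∀ p q : ℝ, X p = X q → ∃ k : ℤ, q - p = (k : ℝ)

/-- The set of values of the local total curvature over all pairs of points on the curve. -/
def thetaVals (X : ℝ → E2) : Set ℝ :=
  {x : ℝ | ∃ p q : ℝ, p ≤ q ∧ q ≤ p + 1 ∧ x = theta X p q}

/-- The time-`t` curve of a flow. -/
def curveAt (X : ℝ → ℝ → E2) (t : ℝ) : ℝ → E2 := fun p => X p t

/-- Joint smoothness of a flow of curves. -/
def SmoothFlow (X : ℝ → ℝ → E2) : Prop :=
  ContDiff ℝ (⊤ : ℕ∞) (fun z : ℝ × ℝ => X z.1 z.2)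

/-- The flow equation `∂X/∂t = (h(t) - κ)ν` holding for all times in `S`. -/
def FlowEq (X : ℝ → ℝ → E2) (h : ℝ → ℝ) (S : Set ℝ) : Prop :=
  ∀ p : ℝ, ∀ t ∈ S,
    HasDerivAt (fun s => X p s)
      ((h t - curv (curveAt X t) p) • nvec (curveAt X t) p) t

/-!
The integrand of `θ` is `κ v`, where `v = ‖∂X/∂p‖`, and `κ v = dArg (∂ₚX) (∂ₚ∂ₚX)` is the rate at
which the argument of the velocity `∂ₚX` turns. Since `dArg` is the differential of the
(multivalued) argument function, it is closed, so `∂ₜ dArg (∂ₚX) (∂ₚ∂ₚX) = ∂ₚ dArg (∂ₚX) (∂ₜ∂ₚX)`.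
For a normal velocity `∂ₜX = (h - κ) ν` one computes `dArg (∂ₚX) (∂ₚ∂ₜX) = v⁻¹ ∂ₚκ = ∂ₛκ`.
Differentiating `θ(p, q) = ∫_p^q κ v dp` under the integral sign, the fundamental theorem of
calculus then leaves only the boundary terms `∂ₛκ(q) - ∂ₛκ(p)`.
-/

open scoped ContDiff RealInnerProductSpace

def rot90CLM : E2 →L[ℝ] E2 :=
  LinearMap.toContinuousLinearMap
  { toFun := rot90
    map_add' := fun a b => by ext i; fin_cases i <;> simp [rot90]; ring
    map_smul' := fun c a => by ext i; fin_cases i <;> simp [rot90] }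

lemma rot90_smul (c : ℝ) (u : E2) : rot90 (c • u) = c • rot90 u := rot90CLM.map_smul c u

namespace E2

lemma inner_eq (u w : E2) : ⟪u, w⟫ = u 0 * w 0 + u 1 * w 1 := by
  simp [PiLp.inner_apply, Fin.sum_univ_two]; ring

lemma norm_sq_eq (u : E2) : ‖u‖ ^ 2 = u 0 ^ 2 + u 1 ^ 2 := by
  simp [EuclideanSpace.norm_sq_eq, Fin.sum_univ_two]

end E2

lemma inner_rot90 (u w : E2) : ⟪u, rot90 w⟫ = u 0 * w 1 - u 1 * w 0 := by
  simp [rot90, PiLp.inner_apply, Fin.sum_univ_two]; ring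

lemma inner_self_rot90 (u : E2) : ⟪u, rot90 u⟫ = 0 := by rw [inner_rot90]; ring

lemma norm_rot90 (u : E2) : ‖rot90 u‖ = ‖u‖ := by
  rw [← sq_eq_sq₀ (norm_nonneg _) (norm_nonneg _), E2.norm_sq_eq, E2.norm_sq_eq]
  simp [rot90]; ring

/-- The differential of the argument `ℝ² ∖ {0} → ℝ/2πℤ` at `a`, applied to `b`:
`-⟪b, rot90 a⟫ = a₀ b₁ - a₁ b₀` is the cross product of `a` and `b`. -/
def dArg (a b : E2) : ℝ := -⟪b, rot90 a⟫ / ‖a‖ ^ 2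

lemma HasDerivAt.dArg {a b : ℝ → E2} {a' b' : E2} {s : ℝ} (ha : HasDerivAt a a' s)
    (hb : HasDerivAt b b' s) (h0 : a s ≠ 0) :
    HasDerivAt (fun s => dArg (a s) (b s))
      ((-(⟪b', rot90 (a s)⟫ + ⟪b s, rot90 a'⟫) - 2 * ⟪a s, a'⟫ * dArg (a s) (b s))
        / ‖a s‖ ^ 2) s := by
  have hJa : HasDerivAt (fun s => rot90 (a s)) (rot90 a') s :=
    rot90CLM.hasFDerivAt.comp_hasDerivAt s ha
  refine ((hb.inner ℝ hJa).neg.div ha.norm_sq (by positivity)).congr_deriv ?_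
  simp only [_root_.dArg, Pi.neg_apply]
  field_simp
  ring

section Calculus

variable {G : Type*} [NormedAddCommGroup G] [NormedSpace ℝ G]

lemma DifferentiableAt.dArg {f g : G → E2} {z : G} (hf : DifferentiableAt ℝ f z)
    (hg : DifferentiableAt ℝ g z) (h0 : f z ≠ 0) :
    DifferentiableAt ℝ (fun x => dArg (f x) (g x)) z := by
  simp only [_root_.dArg, div_eq_mul_inv]
  exact (hg.inner ℝ (rot90CLM.differentiableAt.comp z hf)).neg.mul
    ((hf.norm_sq ℝ).fun_inv (pow_ne_zero 2 (norm_ne_zero_iff.2 h0)))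

lemma ContDiffAt.dArg {n : WithTop ℕ∞} {f g : G → E2} {z : G} (hf : ContDiffAt ℝ n f z)
    (hg : ContDiffAt ℝ n g z) (h0 : f z ≠ 0) : ContDiffAt ℝ n (fun x => dArg (f x) (g x)) z :=
  (hg.inner ℝ (rot90CLM.contDiff.contDiffAt.comp z hf)).neg.div (hf.norm_sq ℝ)
    (pow_ne_zero 2 (norm_ne_zero_iff.2 h0))

lemma fderiv_dArg_apply {f g : G → E2} {z : G} (hf : DifferentiableAt ℝ f z)
    (hg : DifferentiableAt ℝ g z) (h0 : f z ≠ 0) (w : G) :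
    fderiv ℝ (fun x => dArg (f x) (g x)) z w =
      (-(⟪fderiv ℝ g z w, rot90 (f z)⟫ + ⟪g z, rot90 (fderiv ℝ f z w)⟫)
        - 2 * ⟪f z, fderiv ℝ f z w⟫ * dArg (f z) (g z)) / ‖f z‖ ^ 2 := by
  have hline := (hf.hasFDerivAt.hasLineDerivAt w).dArg (hg.hasFDerivAt.hasLineDerivAt w)
    (by simpa using h0)
  simp only [zero_smul, add_zero] at hline
  exact (hf.dArg hg h0).lineDeriv_eq_fderiv.symm.trans (HasLineDerivAt.lineDeriv hline)

lemma fderiv_fderiv_apply {F : Type*} [NormedAddCommGroup F] [NormedSpace ℝ F] {f : G → F}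
    {z : G} (hf : DifferentiableAt ℝ (fderiv ℝ f) z) (v v' : G) :
    fderiv ℝ (fun x => fderiv ℝ f x v) z v' = fderiv ℝ (fderiv ℝ f) z v' v := by
  rw [fderiv_clm_apply hf (differentiableAt_const v)]; simp

/-- `dArg` is closed: its pull-back by `f` is a closed one-form. -/
theorem fderiv_dArg_fderiv_comm {f : G → E2} {z : G} (hf : ContDiffAt ℝ 2 f z) (h0 : f z ≠ 0)
    (u w : G) :
    fderiv ℝ (fun x => dArg (f x) (fderiv ℝ f x u)) z w =
      fderiv ℝ (fun x => dArg (f x) (fderiv ℝ f x w)) z u := by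
  have hdf : DifferentiableAt ℝ f z := hf.differentiableAt (by norm_num)
  have hddf : DifferentiableAt ℝ (fderiv ℝ f) z :=
    (hf.fderiv_right (m := 1) le_rfl).differentiableAt one_ne_zero
  have happly (v : G) : DifferentiableAt ℝ (fun x => fderiv ℝ f x v) z :=
    hddf.clm_apply (differentiableAt_const v)
  rw [fderiv_dArg_apply hdf (happly u) h0, fderiv_dArg_apply hdf (happly w) h0,
    fderiv_fderiv_apply hddf, fderiv_fderiv_apply hddf, (hf.isSymmSndFDerivAt (by simp)) w u]
  have hn : ‖f z‖ ^ 2 ≠ 0 := pow_ne_zero 2 (norm_ne_zero_iff.2 h0)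
  simp only [dArg]
  field_simp
  simp only [inner_rot90]
  simp only [E2.inner_eq, E2.norm_sq_eq]
  ring

end Calculus

section Curve

variable {γ : ℝ → E2} {p : ℝ}

lemma norm_tvec (h0 : deriv γ p ≠ 0) : ‖tvec γ p‖ = 1 := by
  rw [tvec, lenElem, norm_smul, norm_inv, norm_norm, inv_mul_cancel₀ (norm_ne_zero_iff.2 h0)]

lemma norm_nvec (h0 : deriv γ p ≠ 0) : ‖nvec γ p‖ = 1 := by
  rw [nvec, norm_rot90, norm_tvec h0]

lemma rot90_deriv_eq_smul_nvec (h0 : deriv γ p ≠ 0) :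
    rot90 (deriv γ p) = lenElem γ p • nvec γ p := by
  have hv : lenElem γ p ≠ 0 := norm_ne_zero_iff.2 h0
  rw [nvec, tvec, rot90_smul, smul_smul, mul_inv_cancel₀ hv, one_smul]

lemma curv_mul_lenElem (hd : DifferentiableAt ℝ (deriv γ) p) (h0 : deriv γ p ≠ 0) :
    curv γ p * lenElem γ p = dArg (deriv γ p) (deriv (deriv γ) p) := by
  have hv : lenElem γ p ≠ 0 := norm_ne_zero_iff.2 h0
  have hinv : DifferentiableAt ℝ (fun r => (lenElem γ r)⁻¹) p :=
    (hd.norm ℝ h0).inv hv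
  have htvec : HasDerivAt (tvec γ) _ p := hinv.hasDerivAt.smul hd.hasDerivAt
  rw [curv, htvec.deriv, nvec, tvec, rot90_smul, dArg, ← lenElem]
  simp only [real_inner_smul_left, real_inner_smul_right, inner_add_left, inner_self_rot90,
    mul_zero, add_zero]
  field_simp

variable (hγ : ContDiff ℝ ∞ γ) (hreg : ∀ p, deriv γ p ≠ 0)
include hγ hreg

lemma contDiff_tvec : ContDiff ℝ ∞ (tvec γ) :=
  have hd : ContDiff ℝ ∞ (deriv γ) := hγ.iterate_deriv 1
  ((hd.norm ℝ hreg).inv fun p => norm_ne_zero_iff.2 (hreg p)).smul hd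

lemma contDiff_nvec : ContDiff ℝ ∞ (nvec γ) :=
  rot90CLM.contDiff.comp (contDiff_tvec hγ hreg)

lemma contDiff_curv : ContDiff ℝ ∞ (curv γ) :=
  have hd : ContDiff ℝ ∞ (deriv γ) := hγ.iterate_deriv 1
  ((((hd.norm ℝ hreg).inv fun p => norm_ne_zero_iff.2 (hreg p)).smul
    ((contDiff_tvec hγ hreg).iterate_deriv 1)).inner ℝ (contDiff_nvec hγ hreg)).neg

/-- A normal velocity `(c - κ) ν` turns the tangent at the rate `∂κ/∂s`. -/
theorem dArg_deriv_normal_smul (c p : ℝ) :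
    dArg (deriv γ p) (deriv (fun r => (c - curv γ r) • nvec γ r) p) =
      (lenElem γ p)⁻¹ * deriv (curv γ) p := by
  have hκ := ((contDiff_curv hγ hreg).differentiable (by simp) p).hasDerivAt
  have hν := ((contDiff_nvec hγ hreg).differentiable (by simp) p).hasDerivAt
  have hνν : ⟪nvec γ p, nvec γ p⟫ = 1 := by
    rw [real_inner_self_eq_norm_sq, norm_nvec (hreg p), one_pow]
  have hνν' : ⟪nvec γ p, deriv (nvec γ) p⟫ = 0 := by
    have hconst : (fun r => ‖nvec γ r‖ ^ 2) = fun _ => 1 := by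
      funext r; rw [norm_nvec (hreg r), one_pow]
    have := hν.norm_sq
    rw [hconst] at this
    linarith [this.unique (hasDerivAt_const p (1 : ℝ))]
  have hv : lenElem γ p ≠ 0 := norm_ne_zero_iff.2 (hreg p)
  have hW : HasDerivAt (fun r => (c - curv γ r) • nvec γ r) _ p := (hκ.const_sub c).smul hν
  rw [hW.deriv, dArg, rot90_deriv_eq_smul_nvec (hreg p), ← lenElem]
  simp only [real_inner_smul_right, inner_add_left, real_inner_comm, hνν, hνν']
  field_simp
  ring

end Curve

section Partial

variable {E : Type*} [NormedAddCommGroup E] [NormedSpace ℝ E]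

lemma hasDerivAt_fst_slice {g : ℝ × ℝ → E} {p t : ℝ} (hg : DifferentiableAt ℝ g (p, t)) :
    HasDerivAt (fun r => g (r, t)) (fderiv ℝ g (p, t) (1, 0)) p :=
  hg.hasFDerivAt.comp_hasDerivAt p ((hasDerivAt_id p).prodMk (hasDerivAt_const p t))

lemma hasDerivAt_snd_slice {g : ℝ × ℝ → E} {p t : ℝ} (hg : DifferentiableAt ℝ g (p, t)) :
    HasDerivAt (fun s => g (p, s)) (fderiv ℝ g (p, t) (0, 1)) t :=
  hg.hasFDerivAt.comp_hasDerivAt t ((hasDerivAt_const t p).prodMk (hasDerivAt_id t))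

lemma integral_fderiv_fst_slice [CompleteSpace E] {g : ℝ × ℝ → E} {p q t : ℝ}
    (hg : ∀ r ∈ uIcc p q, ContDiffAt ℝ 1 g (r, t)) :
    ∫ r in p..q, fderiv ℝ g (r, t) (1, 0) = g (q, t) - g (p, t) := by
  refine intervalIntegral.integral_eq_sub_of_hasDerivAt
    (fun r hr => hasDerivAt_fst_slice ((hg r hr).differentiableAt one_ne_zero)) ?_
  refine ContinuousOn.intervalIntegrable fun r hr => ContinuousAt.continuousWithinAt ?_
  have hcont : ContinuousAt (fderiv ℝ g) (r, t) := (hg r hr).continuousAt_fderiv one_ne_zero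
  exact (ContinuousAt.comp (f := fun r => (r, t)) hcont (by fun_prop)).clm_apply
    continuousAt_const

lemma hasDerivAt_integral_snd [CompleteSpace E] {k : ℝ × ℝ → E} {I : Set ℝ} (hI : IsOpen I)
    (hk : ∀ z : ℝ × ℝ, z.2 ∈ I → ContDiffAt ℝ 1 k z) {t : ℝ} (ht : t ∈ I) (p q : ℝ) :
    HasDerivAt (fun s => ∫ r in p..q, k (r, s)) (∫ r in p..q, fderiv ℝ k (r, t) (0, 1)) t := by
  obtain ⟨ε, hε, hball⟩ : ∃ ε > 0, Metric.closedBall t ε ⊆ I :=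
    Metric.nhds_basis_closedBall.mem_iff.1 (hI.mem_nhds ht)
  have hslice (s : ℝ) : Continuous fun r : ℝ => (r, s) := by fun_prop
  have hcont (s : ℝ) (hs : s ∈ I) : Continuous fun r => k (r, s) :=
    continuous_iff_continuousAt.2 fun r =>
      ContinuousAt.comp (f := fun r => (r, s)) (hk (r, s) hs).continuousAt (hslice s).continuousAt
  have hcont' : ContinuousOn (fun z => fderiv ℝ k z (0, 1)) (univ ×ˢ I) := fun z hz =>
    (((hk z hz.2).continuousAt_fderiv one_ne_zero).clm_apply continuousAt_const).continuousWithinAt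
  obtain ⟨C, hC⟩ := (isCompact_uIcc.prod (isCompact_closedBall t ε)).exists_bound_of_continuousOn
    (hcont'.mono (prod_mono (subset_univ _) hball))
  refine (intervalIntegral.hasDerivAt_integral_of_dominated_loc_of_deriv_le
    (bound := fun _ => C) (Metric.ball_mem_nhds t hε)
    (Filter.eventually_of_mem (hI.mem_nhds ht) fun s hs => (hcont s hs).aestronglyMeasurable)
    ((hcont t ht).intervalIntegrable p q)
    ((hcont'.comp_continuous (hslice t) fun r => ⟨mem_univ r, ht⟩).aestronglyMeasurable)
    (Filter.Eventually.of_forall fun r hr s hs =>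
      hC (r, s) ⟨uIoc_subset_uIcc hr, Metric.ball_subset_closedBall hs⟩)
    intervalIntegrable_const
    (Filter.Eventually.of_forall fun r _ s hs => hasDerivAt_snd_slice
      ((hk (r, s) (hball (Metric.ball_subset_closedBall hs))).differentiableAt one_ne_zero))).2

end Partial

def paramDeriv (X : ℝ → ℝ → E2) (z : ℝ × ℝ) : E2 := fderiv ℝ (Function.uncurry X) z (1, 0)

namespace SmoothFlow

variable {X : ℝ → ℝ → E2} (hsm : SmoothFlow X)
include hsm

lemma contDiff_uncurry : ContDiff ℝ ∞ (Function.uncurry X) := hsm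

lemma contDiff_curveAt (t : ℝ) : ContDiff ℝ ∞ (curveAt X t) :=
  hsm.contDiff_uncurry.comp (contDiff_id.prodMk contDiff_const)

lemma contDiff_paramDeriv : ContDiff ℝ ∞ (paramDeriv X) :=
  (hsm.contDiff_uncurry.fderiv_right (m := ∞) (by simp)).clm_apply contDiff_const

lemma differentiableAt_fderiv (z : ℝ × ℝ) :
    DifferentiableAt ℝ (fderiv ℝ (Function.uncurry X)) z :=
  (hsm.contDiff_uncurry.fderiv_right (m := ∞) (by simp)).differentiable (by simp) z

lemma deriv_curveAt (t : ℝ) : deriv (curveAt X t) = fun p => paramDeriv X (p, t) :=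
  funext fun p => (hasDerivAt_fst_slice
    ((hsm.contDiff_uncurry.differentiable (by simp)) (p, t))).deriv

lemma curv_mul_lenElem {p t : ℝ} (h0 : paramDeriv X (p, t) ≠ 0) :
    curv (curveAt X t) p * lenElem (curveAt X t) p =
      dArg (paramDeriv X (p, t)) (fderiv ℝ (paramDeriv X) (p, t) (1, 0)) := by
  have hV := hasDerivAt_fst_slice ((hsm.contDiff_paramDeriv.differentiable (by simp)) (p, t))
  rw [_root_.curv_mul_lenElem (by rw [hsm.deriv_curveAt]; exact hV.differentiableAt)
    (by rwa [hsm.deriv_curveAt]), hsm.deriv_curveAt, hV.deriv]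

lemma fderiv_paramDeriv_snd {h : ℝ → ℝ} {S : Set ℝ} (hflow : FlowEq X h S) {t : ℝ} (ht : t ∈ S)
    (p : ℝ) : fderiv ℝ (paramDeriv X) (p, t) (0, 1) =
      deriv (fun r => (h t - curv (curveAt X t) r) • nvec (curveAt X t) r) p := by
  have hnormal : (fun r => fderiv ℝ (Function.uncurry X) (r, t) (0, 1)) =
      fun r => (h t - curv (curveAt X t) r) • nvec (curveAt X t) r := funext fun r =>
    (hasDerivAt_snd_slice ((hsm.contDiff_uncurry.differentiable (by simp)) (r, t))).unique
      (hflow r t ht)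
  unfold paramDeriv
  rw [fderiv_fderiv_apply (hsm.differentiableAt_fderiv _),
    (hsm.contDiff_uncurry.contDiffAt.isSymmSndFDerivAt (by simp [ENat.LEInfty.out])) (0, 1) (1, 0),
    ← fderiv_fderiv_apply (hsm.differentiableAt_fderiv _), ← hnormal]
  exact (hasDerivAt_fst_slice (((hsm.differentiableAt_fderiv _).clm_apply
    (differentiableAt_const _)))).deriv.symm

lemma contDiffAt_dArg_paramDeriv {z : ℝ × ℝ} (h0 : paramDeriv X z ≠ 0) (w : ℝ × ℝ) :
    ContDiffAt ℝ 1 (fun z => dArg (paramDeriv X z) (fderiv ℝ (paramDeriv X) z w)) z :=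
  (hsm.contDiff_paramDeriv.contDiffAt.dArg
    ((hsm.contDiff_paramDeriv.fderiv_right (m := ∞) (by simp)).clm_apply contDiff_const).contDiffAt
    h0).of_le ENat.LEInfty.out

lemma dArg_paramDeriv_snd {h : ℝ → ℝ} {S : Set ℝ} (hflow : FlowEq X h S) {t : ℝ} (ht : t ∈ S)
    (hreg : ∀ p, deriv (curveAt X t) p ≠ 0) (p : ℝ) :
    dArg (paramDeriv X (p, t)) (fderiv ℝ (paramDeriv X) (p, t) (0, 1)) =
      (lenElem (curveAt X t) p)⁻¹ * deriv (curv (curveAt X t)) p := by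
  rw [hsm.fderiv_paramDeriv_snd hflow ht, show paramDeriv X (p, t) = deriv (curveAt X t) p by
    rw [hsm.deriv_curveAt]]
  exact dArg_deriv_normal_smul (hsm.contDiff_curveAt t) hreg _ p

end SmoothFlow

theorem theta_two_point_heat_equation_general
    (T : ℝ) (X : ℝ → ℝ → E2) (h : ℝ → ℝ)
    (hsm : SmoothFlow X)
    (hreg : ∀ t ∈ Set.Ioo 0 T, ∀ p, deriv (curveAt X t) p ≠ 0)
    (hflow : FlowEq X h (Set.Ioo 0 T)) :
    ∀ p q : ℝ, p ≠ q → ∀ t ∈ Set.Ioo 0 T,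
      HasDerivAt (fun s : ℝ => theta (curveAt X s) p q)
        ((lenElem (curveAt X t) q)⁻¹ * deriv (curv (curveAt X t)) q
          - (lenElem (curveAt X t) p)⁻¹ * deriv (curv (curveAt X t)) p) t := by
  intro p q _ t ht
  have hV0 (z : ℝ × ℝ) (hz : z.2 ∈ Ioo 0 T) : paramDeriv X z ≠ 0 := by
    simpa [hsm.deriv_curveAt] using hreg z.2 hz z.1
  have hθ : (fun s => theta (curveAt X s) p q) =ᶠ[nhds t] fun s =>
      ∫ r in p..q, dArg (paramDeriv X (r, s)) (fderiv ℝ (paramDeriv X) (r, s) (1, 0)) := by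
    filter_upwards [isOpen_Ioo.mem_nhds ht] with s hs
    exact intervalIntegral.integral_congr fun r _ => hsm.curv_mul_lenElem (hV0 (r, s) hs)
  refine ((hasDerivAt_integral_snd isOpen_Ioo
    (fun z hz => hsm.contDiffAt_dArg_paramDeriv (hV0 z hz) (1, 0)) ht p q).congr_of_eventuallyEq
    hθ).congr_deriv ?_
  rw [intervalIntegral.integral_congr fun r _ => fderiv_dArg_fderiv_comm
      (hsm.contDiff_paramDeriv.contDiffAt.of_le ENat.LEInfty.out) (hV0 (r, t) ht) (1, 0) (0, 1),
    integral_fderiv_fst_slice fun r _ => hsm.contDiffAt_dArg_paramDeriv (hV0 (r, t) ht) (0, 1),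
    hsm.dArg_paramDeriv_snd hflow ht (hreg t ht), hsm.dArg_paramDeriv_snd hflow ht (hreg t ht)]

/-- **Theorem (Dittberner, Thm. 3.4, heat equation part).**
Along the flow `∂X/∂t = (h(t) - κ)ν` through embedded closed curves, the local total
curvature `θ(p,q,t) = ∫_p^q κ ds_t` satisfies
`∂θ/∂t = ∂κ/∂s(q,t) - ∂κ/∂s(p,t)` for all `p ≠ q` and `t ∈ (0,T)`,
where `∂/∂s = v⁻¹ ∂/∂p` is the arc-length derivative. -/
theorem theta_two_point_heat_equation
    (T : ℝ) (hT : 0 < T) (X : ℝ → ℝ → E2) (h : ℝ → ℝ)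
    (hsm : SmoothFlow X)
    (hper : ∀ t, Function.Periodic (curveAt X t) 1)
    (hreg : ∀ t ∈ Set.Ioo 0 T, ∀ p, deriv (curveAt X t) p ≠ 0)
    (hemb : ∀ t ∈ Set.Ioo 0 T, IsEmbedded (curveAt X t))
    (hh : ∀ t ∈ Set.Ioo 0 T, 0 ≤ h t)
    (hhsm : ContDiffOn ℝ (⊤ : ℕ∞) h (Set.Ioo 0 T))
    (hflow : FlowEq X h (Set.Ioo 0 T)) :
    ∀ p q : ℝ, p ≠ q → ∀ t ∈ Set.Ioo 0 T,
      HasDerivAt (fun s : ℝ => theta (curveAt X s) p q)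
        ((lenElem (curveAt X t) q)⁻¹ * deriv (curv (curveAt X t)) q
          - (lenElem (curveAt X t) p)⁻¹ * deriv (curv (curveAt X t)) p) t :=
  theta_two_point_heat_equation_general T X h hsm hreg hflow
end
end

section
/- Let Σ = X(S¹) be an embedded, closed, smooth plane curve and let p, q ∈ S¹ with d(p,q) ≠ 0. Write w = (X(q) − X(p))/d(p,q) and suppose ⟨w, τ_p⟩ = ⟨w, τ_q⟩ = cos(β/2) for some β ∈ [0, π]. Then exactly one of the following holds for some k ∈ ℤ: (i) ⟨w, ν_p⟩ = −⟨w, ν_q⟩ = −sin(β/2) and θ(p,q) = 2πk + β; (ii) ⟨w, ν_p⟩ = −⟨w, ν_q⟩ = sin(β/2) and θ(p,q) = 2πk − β; (iii) ⟨w, ν_p⟩ = ⟨w, ν_q⟩ = ±sin(β/2) and θ(p,q) = 2πk. -/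
/-!
Identify `ℝ²` with `ℂ`. The unit tangent `T` obeys the Frenet equation `T' = i κ v T`, so
`T(q) = e^{i θ(p,q)} T(p)`. Writing `conj w · T(p) = e^{iα}`, this gives
`⟨w, τ_r⟩ = cos (α + θ(p,r))` and `⟨w, ν_r⟩ = sin (α + θ(p,r))`. The hypothesis then says that
`α` and `α + θ(p,q)` are both `± β/2` modulo `2π`, and the four choices of signs give the three
cases.
-/

open Real Set MeasureTheory

noncomputable section

open Complex ComplexConjugate

def toComplex : E2 ≃ₗᵢ[ℝ] ℂ := Complex.orthonormalBasisOneI.repr.symm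

theorem toComplex_apply (u : E2) : toComplex u = u 0 + u 1 * I :=
  Complex.orthonormalBasisOneI_repr_symm_apply u

theorem toComplex_rot90 (u : E2) : toComplex (rot90 u) = -I * toComplex u := by
  simp only [toComplex_apply, rot90, Matrix.cons_val_zero, Matrix.cons_val_one,
    Matrix.cons_val_fin_one, ofReal_neg]
  linear_combination (u 1 : ℂ) * I_sq

theorem inner_eq_re_conj_mul (u v : E2) :
    (inner ℝ u v : ℝ) = (conj (toComplex u) * toComplex v).re := by
  rw [← toComplex.inner_map_map, Complex.inner, mul_comm]

theorem hasDerivAt_eq_of_norm_eq_one {Z : ℝ → ℂ} {Z' : ℂ} {r : ℝ} (hZ : ∀ s, ‖Z s‖ = 1)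
    (hZ' : HasDerivAt Z Z' r) : Z' = ((conj (Z r) * Z').im * I) * Z r := by
  have hre : (conj (Z r) * Z').re = 0 := by
    have h := hZ'.norm_sq
    simp only [hZ, one_pow] at h
    have h0 := h.unique (hasDerivAt_const r 1)
    rw [Complex.inner, mul_comm Z'] at h0
    linarith
  have hunit : conj (Z r) * Z r = 1 := by
    rw [mul_comm, mul_conj, normSq_eq_norm_sq, hZ, one_pow, ofReal_one]
  calc Z' = (conj (Z r) * Z') * Z r := by linear_combination (-Z') * hunit
    _ = _ := by
      congr 1
      apply Complex.ext <;> simp [hre]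

theorem eq_mul_exp_integral_of_hasDerivAt {Z g : ℝ → ℂ} (hg : Continuous g)
    (hZ : ∀ r, HasDerivAt Z (g r * Z r) r) (p q : ℝ) :
    Z q = Z p * exp (∫ r in p..q, g r) := by
  set G : ℝ → ℂ := fun s => ∫ r in p..s, g r
  have hG : ∀ s, HasDerivAt G (g s) s := fun s =>
    intervalIntegral.integral_hasDerivAt_right (hg.intervalIntegrable _ _)
      (hg.stronglyMeasurableAtFilter _ _) hg.continuousAt
  have hconst : ∀ s, HasDerivAt (fun s => Z s * exp (-G s)) 0 s := fun s => by
    refine ((hZ s).mul (hG s).neg.cexp).congr_deriv ?_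
    ring
  have h := is_const_of_deriv_eq_zero (fun s => (hconst s).differentiableAt)
    (fun s => (hconst s).deriv) q p
  simp only [G, intervalIntegral.integral_same, neg_zero, Complex.exp_zero, mul_one] at h
  rw [← h, mul_assoc, ← Complex.exp_add, neg_add_cancel, Complex.exp_zero, mul_one]

section RegularCurve

variable {X : ℝ → E2}

theorem lenElem_ne_zero (hreg : ∀ p, deriv X p ≠ 0) (r : ℝ) : lenElem X r ≠ 0 :=
  norm_ne_zero_iff.mpr (hreg r)

theorem norm_tvec_s5 (hreg : ∀ p, deriv X p ≠ 0) (r : ℝ) : ‖tvec X r‖ = 1 := by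
  rw [tvec, norm_smul, norm_inv, lenElem, norm_norm,
    inv_mul_cancel₀ (norm_ne_zero_iff.mpr (hreg r))]

theorem contDiff_tvec_s5 (hX : ContDiff ℝ 2 X) (hreg : ∀ p, deriv X p ≠ 0) :
    ContDiff ℝ 1 (tvec X) := by
  have hX' : ContDiff ℝ 1 (deriv X) := (contDiff_succ_iff_deriv.mp hX).2.2
  refine contDiff_iff_contDiffAt.mpr fun r => ?_
  exact ((hX'.contDiffAt.norm ℝ (hreg r)).inv (lenElem_ne_zero hreg r)).smul hX'.contDiffAt

theorem curv_mul_lenElem_s5 (hreg : ∀ p, deriv X p ≠ 0) (r : ℝ) :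
    curv X r * lenElem X r =
      (conj (toComplex (tvec X r)) * toComplex (deriv (tvec X) r)).im := by
  rw [curv, nvec, real_inner_smul_left, inner_eq_re_conj_mul, toComplex_rot90,
    neg_mul, mul_right_comm, inv_mul_cancel₀ (lenElem_ne_zero hreg r), one_mul]
  simp only [mul_re, mul_im, neg_re, neg_im, I_re, I_im, conj_re, conj_im]
  ring

theorem hasDerivAt_toComplex_tvec (hX : ContDiff ℝ 2 X) (hreg : ∀ p, deriv X p ≠ 0) (r : ℝ) :
    HasDerivAt (fun s => toComplex (tvec X s))
      (((curv X r * lenElem X r : ℝ) : ℂ) * I * toComplex (tvec X r)) r := by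
  have hT : HasDerivAt (fun s => toComplex (tvec X s)) (toComplex (deriv (tvec X) r)) r :=
    toComplex.toContinuousLinearEquiv.hasFDerivAt.comp_hasDerivAt r
      ((contDiff_tvec_s5 hX hreg).differentiable one_ne_zero r).hasDerivAt
  rw [curv_mul_lenElem_s5 hreg]
  exact hasDerivAt_eq_of_norm_eq_one
    (fun s => by rw [LinearIsometryEquiv.norm_map, norm_tvec_s5 hreg]) hT ▸ hT

theorem continuous_curv_mul_lenElem (hX : ContDiff ℝ 2 X) (hreg : ∀ p, deriv X p ≠ 0) :
    Continuous fun r => curv X r * lenElem X r := by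
  have hτ := contDiff_one_iff_deriv.mp (contDiff_tvec_s5 hX hreg)
  simp only [curv_mul_lenElem_s5 hreg]
  exact continuous_im.comp ((continuous_conj.comp (toComplex.continuous.comp hτ.1.continuous)).mul
    (toComplex.continuous.comp hτ.2))

theorem toComplex_tvec_eq_mul_exp_theta (hX : ContDiff ℝ 2 X) (hreg : ∀ p, deriv X p ≠ 0)
    (p q : ℝ) :
    toComplex (tvec X q) = toComplex (tvec X p) * exp (theta X p q * I) := by
  have hg : Continuous fun r => ((curv X r * lenElem X r : ℝ) : ℂ) * I :=
    (continuous_ofReal.comp (continuous_curv_mul_lenElem hX hreg)).mul continuous_const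
  have h := eq_mul_exp_integral_of_hasDerivAt hg (hasDerivAt_toComplex_tvec hX hreg) p q
  rwa [intervalIntegral.integral_mul_const, intervalIntegral.integral_ofReal] at h

theorem exists_inner_tvec_nvec_eq_cos_sin (hX : ContDiff ℝ 2 X) (hreg : ∀ p, deriv X p ≠ 0)
    (p : ℝ) {w : E2} (hw : ‖w‖ = 1) :
    ∃ α : ℝ, ∀ r, (inner ℝ w (tvec X r) : ℝ) = Real.cos (α + theta X p r) ∧
      (inner ℝ w (nvec X r) : ℝ) = Real.sin (α + theta X p r) := by
  set u := conj (toComplex w) * toComplex (tvec X p)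
  have hu : ‖u‖ = 1 := by
    rw [norm_mul, RCLike.norm_conj, LinearIsometryEquiv.norm_map, LinearIsometryEquiv.norm_map, hw,
      norm_tvec_s5 hreg, one_mul]
  refine ⟨arg u, fun r => ?_⟩
  have hr : conj (toComplex w) * toComplex (tvec X r) = exp (↑(arg u + theta X p r) * I) := by
    rw [toComplex_tvec_eq_mul_exp_theta hX hreg p r, ← mul_assoc, ofReal_add, add_mul,
      Complex.exp_add, ← one_mul (exp (arg u * I)), ← ofReal_one, ← hu, norm_mul_exp_arg_mul_I]
  constructor
  · rw [inner_eq_re_conj_mul, hr, exp_ofReal_mul_I_re]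
  · rw [inner_eq_re_conj_mul, nvec, toComplex_rot90, mul_left_comm, hr, neg_mul, neg_re,
      I_mul_re, neg_neg, exp_ofReal_mul_I_im]

end RegularCurve

theorem norm_wvec {X : ℝ → E2} {p q : ℝ} (hd : extd X p q ≠ 0) : ‖wvec X p q‖ = 1 :=
  norm_smul_inv_norm (norm_ne_zero_iff.mp hd)

theorem exists_eq_and_sin_eq_of_cos_eq {x b : ℝ} (h : Real.cos x = Real.cos b) :
    ∃ k : ℤ, (x = b + 2 * π * k ∧ Real.sin x = Real.sin b) ∨
      (x = -b + 2 * π * k ∧ Real.sin x = -Real.sin b) := by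
  obtain ⟨k, hk | hk⟩ := Real.cos_eq_cos_iff.mp h
  · refine ⟨-k, Or.inl ⟨by push_cast; linarith, ?_⟩⟩
    rw [← Real.sin_add_int_mul_two_pi b (-k)]
    congr 1
    push_cast
    linarith
  · refine ⟨k, Or.inr ⟨by linarith, ?_⟩⟩
    rw [← Real.sin_neg, ← Real.sin_add_int_mul_two_pi (-b) k]
    congr 1
    linarith

theorem cos_eq_cos_cases {x y b : ℝ} (hx : Real.cos x = Real.cos b) (hy : Real.cos y = Real.cos b) :
    (∃ k : ℤ, Real.sin x = -Real.sin b ∧ Real.sin y = Real.sin b ∧ y - x = 2 * π * k + 2 * b) ∨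
    (∃ k : ℤ, Real.sin x = Real.sin b ∧ Real.sin y = -Real.sin b ∧ y - x = 2 * π * k - 2 * b) ∨
    (∃ k : ℤ, (Real.sin x = Real.sin b ∧ Real.sin y = Real.sin b ∨
        Real.sin x = -Real.sin b ∧ Real.sin y = -Real.sin b) ∧ y - x = 2 * π * k) := by
  obtain ⟨m, ⟨hx, hsx⟩ | ⟨hx, hsx⟩⟩ := exists_eq_and_sin_eq_of_cos_eq hx <;>
    obtain ⟨n, ⟨hy, hsy⟩ | ⟨hy, hsy⟩⟩ := exists_eq_and_sin_eq_of_cos_eq hy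
  · exact Or.inr (Or.inr ⟨n - m, Or.inl ⟨hsx, hsy⟩, by push_cast; linarith⟩)
  · exact Or.inr (Or.inl ⟨n - m, hsx, hsy, by push_cast; linarith⟩)
  · exact Or.inl ⟨n - m, hsx, hsy, by push_cast; linarith⟩
  · exact Or.inr (Or.inr ⟨n - m, Or.inr ⟨hsx, hsy⟩, by push_cast; linarith⟩)

theorem theta_beta_cases_general
    (X : ℝ → E2) (hcc : IsClosedCurve X)
    (p q : ℝ) (hd : extd X p q ≠ 0) (β : ℝ)
    (hwp : (inner ℝ (wvec X p q) (tvec X p) : ℝ) = Real.cos (β / 2))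
    (hwq : (inner ℝ (wvec X p q) (tvec X q) : ℝ) = Real.cos (β / 2)) :
    (∃ k : ℤ, (inner ℝ (wvec X p q) (nvec X p) : ℝ) = -Real.sin (β / 2) ∧
        (inner ℝ (wvec X p q) (nvec X q) : ℝ) = Real.sin (β / 2) ∧
        theta X p q = 2 * π * k + β) ∨
    (∃ k : ℤ, (inner ℝ (wvec X p q) (nvec X p) : ℝ) = Real.sin (β / 2) ∧
        (inner ℝ (wvec X p q) (nvec X q) : ℝ) = -Real.sin (β / 2) ∧
        theta X p q = 2 * π * k - β) ∨
    (∃ k : ℤ, ((inner ℝ (wvec X p q) (nvec X p) : ℝ) = Real.sin (β / 2) ∧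
          (inner ℝ (wvec X p q) (nvec X q) : ℝ) = Real.sin (β / 2) ∨
        (inner ℝ (wvec X p q) (nvec X p) : ℝ) = -Real.sin (β / 2) ∧
          (inner ℝ (wvec X p q) (nvec X q) : ℝ) = -Real.sin (β / 2)) ∧
        theta X p q = 2 * π * k) := by
  obtain ⟨hsmooth, -, hreg⟩ := hcc
  obtain ⟨α, hα⟩ := exists_inner_tvec_nvec_eq_cos_sin (hsmooth.of_le (by norm_cast)) hreg p
    (norm_wvec hd)
  obtain ⟨hτp, hνp⟩ := hα p
  obtain ⟨hτq, hνq⟩ := hα q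
  rw [theta, intervalIntegral.integral_same, add_zero] at hτp hνp
  rw [hνp, hνq]
  rcases cos_eq_cos_cases (hτp ▸ hwp) (hτq ▸ hwq) with ⟨k, hx, hy, hk⟩ | ⟨k, hx, hy, hk⟩ |
    ⟨k, hxy, hk⟩
  · exact Or.inl ⟨k, hx, hy, by linarith⟩
  · exact Or.inr (Or.inl ⟨k, hx, hy, by linarith⟩)
  · exact Or.inr (Or.inr ⟨k, hxy, by linarith⟩)

/-- **Lemma (Dittberner, Lem. 3.5).**
Let `Σ = X(S¹)` be an embedded closed curve, `p, q` with `d(p,q) ≠ 0`, and suppose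
`⟨w, τ_p⟩ = ⟨w, τ_q⟩ = cos(β/2)` for some `β ∈ [0, π]`. Then, for some `k ∈ ℤ`, either
(i) `⟨w, ν_p⟩ = -⟨w, ν_q⟩ = -sin(β/2)` and `θ(p,q) = 2πk + β`,
(ii) `⟨w, ν_p⟩ = -⟨w, ν_q⟩ = sin(β/2)` and `θ(p,q) = 2πk - β`, or
(iii) `⟨w, ν_p⟩ = ⟨w, ν_q⟩ = ±sin(β/2)` and `θ(p,q) = 2πk`. -/
theorem theta_beta_cases
    (X : ℝ → E2) (hcc : IsClosedCurve X) (hemb : IsEmbedded X)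
    (p q : ℝ) (hd : extd X p q ≠ 0) (β : ℝ) (hβ : β ∈ Set.Icc 0 π)
    (hwp : (inner ℝ (wvec X p q) (tvec X p) : ℝ) = Real.cos (β / 2))
    (hwq : (inner ℝ (wvec X p q) (tvec X q) : ℝ) = Real.cos (β / 2)) :
    (∃ k : ℤ, (inner ℝ (wvec X p q) (nvec X p) : ℝ) = -Real.sin (β / 2) ∧
        (inner ℝ (wvec X p q) (nvec X q) : ℝ) = Real.sin (β / 2) ∧
        theta X p q = 2 * π * k + β) ∨
    (∃ k : ℤ, (inner ℝ (wvec X p q) (nvec X p) : ℝ) = Real.sin (β / 2) ∧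
        (inner ℝ (wvec X p q) (nvec X q) : ℝ) = -Real.sin (β / 2) ∧
        theta X p q = 2 * π * k - β) ∨
    (∃ k : ℤ, ((inner ℝ (wvec X p q) (nvec X p) : ℝ) = Real.sin (β / 2) ∧
          (inner ℝ (wvec X p q) (nvec X q) : ℝ) = Real.sin (β / 2) ∨
        (inner ℝ (wvec X p q) (nvec X p) : ℝ) = -Real.sin (β / 2) ∧
          (inner ℝ (wvec X p q) (nvec X q) : ℝ) = -Real.sin (β / 2)) ∧
        theta X p q = 2 * π * k) :=
  theta_beta_cases_general X hcc p q hd β hwp hwq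
end
end

section
/- Let Σ = X(S¹) be an embedded, closed, smooth plane curve and suppose the function (p,q) ↦ d(p,q)/ψ(p,q) attains a local minimum at a pair (p,q) with p ≠ q and l(p,q) ≤ L/2. Then the first-derivative conditions force ⟨w, τ_p⟩ = ⟨w, τ_q⟩ = (d/ψ)(p,q) · cos(π l(p,q)/L). In particular, if additionally (d/ψ)(p,q) < 1, then ⟨w, τ_p⟩ = ⟨w, τ_q⟩ = cos(β/2) for some β ∈ (0, π], where cos(β/2) ∈ [0,1). -/
open Real Set MeasureTheory

noncomputable section

/-! Restricting `d/ψ` to each coordinate line through `(p, q)` gives a one-variable local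
minimum, so the derivative of the quotient vanishes: `d' ψ = d ψ'`. In arc length, the
derivative of `d` in `q` is `⟨w, τ_q⟩` and that of `ψ` is `cos(π l/L)` (with opposite signs in
`p`), which yields the first claim. For the second, `c := (d/ψ) cos(π l/L)` lies in `[0, 1)`
because `l ≤ L/2`, and `β := 2 arccos c` works. -/

theorem hasDerivAt_norm_of_ne_zero {F : Type*} [NormedAddCommGroup F] [InnerProductSpace ℝ F]
    {Y : ℝ → F} {Y' : F} {x : ℝ} (h : HasDerivAt Y Y' x) (hx : Y x ≠ 0) :
    HasDerivAt (fun t => ‖Y t‖) (inner ℝ (‖Y x‖⁻¹ • Y x) Y') x := by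
  have hsq : ‖Y x‖ ^ 2 ≠ 0 := pow_ne_zero _ (norm_ne_zero_iff.2 hx)
  have hsqrt := (Real.hasDerivAt_sqrt hsq).comp x h.norm_sq
  simp only [Function.comp_def, Real.sqrt_sq (norm_nonneg _)] at hsqrt
  refine hsqrt.congr_deriv ?_
  rw [real_inner_smul_left]
  field_simp

theorem IsLocalMin.deriv_mul_eq_mul_deriv_of_div {f g : ℝ → ℝ} {f' g' a : ℝ}
    (hmin : IsLocalMin (fun x => f x / g x) a) (hf : HasDerivAt f f' a) (hg : HasDerivAt g g' a)
    (hga : g a ≠ 0) : f' * g a = f a * g' := by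
  have h := hmin.hasDerivAt_eq_zero (hf.div hg hga)
  rwa [div_eq_zero_iff, sub_eq_zero, or_iff_left (pow_ne_zero 2 hga)] at h

theorem HasDerivAt.sin_scaled {ℓ : ℝ → ℝ} {ℓ' x : ℝ} (L : ℝ) (h : HasDerivAt ℓ ℓ' x)
    (hL : L ≠ 0) :
    HasDerivAt (fun y => (L / π) * Real.sin (π * ℓ y / L)) (Real.cos (π * ℓ x / L) * ℓ') x := by
  have h' := (((h.const_mul π).div_const L).sin).const_mul (L / π)
  refine h'.congr_deriv ?_
  field_simp

theorem eq_div_mul_of_mul_mul_eq {a v ψ d C : ℝ} (hv : v ≠ 0) (hψ : ψ ≠ 0)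
    (h : a * v * ψ = d * (C * v)) : a = d / ψ * C := by
  field_simp
  exact mul_right_cancel₀ hv (by linear_combination h)

theorem exists_mem_Ioc_cos_half_eq {c : ℝ} (hc : c ∈ Ico 0 1) :
    ∃ β ∈ Ioc 0 π, Real.cos (β / 2) = c := by
  refine ⟨2 * Real.arccos c, ⟨?_, ?_⟩, ?_⟩
  · linarith [Real.arccos_pos.2 hc.2]
  · linarith [Real.arccos_le_pi_div_two.2 hc.1]
  · rw [mul_div_cancel_left₀ _ two_ne_zero, Real.cos_arccos (by linarith [hc.1]) hc.2.le]

theorem IsEmbedded.apply_ne {X : ℝ → E2} (hX : IsEmbedded X) {p q : ℝ} (hpq : p < q)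
    (hq : q < p + 1) : X q ≠ X p := by
  intro h
  obtain ⟨k, hk⟩ := hX p q h.symm
  have h0 : (0 : ℝ) < k := by linarith
  have h1 : (k : ℝ) < 1 := by linarith
  norm_cast at h0 h1
  omega

namespace IsClosedCurve

variable {X : ℝ → E2} (hX : IsClosedCurve X)
include hX

theorem lenElem_pos (p : ℝ) : 0 < lenElem X p :=
  norm_pos_iff.2 (hX.2.2 p)

theorem continuous_lenElem : Continuous (lenElem X) :=
  (hX.1.continuous_deriv (by simp)).norm

theorem deriv_eq_lenElem_smul_tvec (p : ℝ) : deriv X p = lenElem X p • tvec X p := by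
  rw [tvec, smul_inv_smul₀ (hX.lenElem_pos p).ne']

theorem arcl_pos {p q : ℝ} (hpq : p < q) : 0 < arcl X p q :=
  intervalIntegral.intervalIntegral_pos_of_pos (hX.continuous_lenElem.intervalIntegrable p q)
    hX.lenElem_pos hpq

theorem clen_pos : 0 < clen X :=
  hX.arcl_pos one_pos

theorem hasDerivAt_arcl_right (p q : ℝ) : HasDerivAt (arcl X p) (lenElem X q) q :=
  intervalIntegral.integral_hasDerivAt_right (hX.continuous_lenElem.intervalIntegrable p q)
    (hX.continuous_lenElem.stronglyMeasurableAtFilter _ _) hX.continuous_lenElem.continuousAt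

theorem hasDerivAt_arcl_left (p q : ℝ) :
    HasDerivAt (fun x => arcl X x q) (-lenElem X p) p :=
  intervalIntegral.integral_hasDerivAt_left (hX.continuous_lenElem.intervalIntegrable p q)
    (hX.continuous_lenElem.stronglyMeasurableAtFilter _ _) hX.continuous_lenElem.continuousAt

theorem hasDerivAt_psi_right (p q : ℝ) :
    HasDerivAt (psi X p) (Real.cos (π * arcl X p q / clen X) * lenElem X q) q :=
  (hX.hasDerivAt_arcl_right p q).sin_scaled _ hX.clen_pos.ne'

theorem hasDerivAt_psi_left (p q : ℝ) :
    HasDerivAt (fun x => psi X x q) (Real.cos (π * arcl X p q / clen X) * -lenElem X p) p :=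
  (hX.hasDerivAt_arcl_left p q).sin_scaled _ hX.clen_pos.ne'

theorem hasDerivAt_extd_right {p q : ℝ} (hne : X q ≠ X p) :
    HasDerivAt (extd X p) (inner ℝ (wvec X p q) (tvec X q) * lenElem X q) q := by
  have h := hasDerivAt_norm_of_ne_zero
    (((hX.1.differentiable (by simp)) q).hasDerivAt.sub_const (X p)) (sub_ne_zero.2 hne)
  rwa [hX.deriv_eq_lenElem_smul_tvec, real_inner_smul_right, mul_comm] at h

theorem hasDerivAt_extd_left {p q : ℝ} (hne : X q ≠ X p) :
    HasDerivAt (fun x => extd X x q) (inner ℝ (wvec X p q) (tvec X p) * -lenElem X p) p := by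
  have h := hasDerivAt_norm_of_ne_zero
    (((hX.1.differentiable (by simp)) p).hasDerivAt.const_sub (X q)) (sub_ne_zero.2 hne)
  rw [hX.deriv_eq_lenElem_smul_tvec, inner_neg_right, real_inner_smul_right] at h
  rwa [← neg_mul, mul_comm] at h

theorem psi_pos {p q : ℝ} (hpq : p < q) (hl : arcl X p q ≤ clen X / 2) : 0 < psi X p q := by
  have hL := hX.clen_pos
  refine mul_pos (div_pos hL Real.pi_pos) (Real.sin_pos_of_pos_of_lt_pi ?_ ?_)
  · exact div_pos (mul_pos Real.pi_pos (hX.arcl_pos hpq)) hL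
  · rw [div_lt_iff₀ hL]
    nlinarith [Real.pi_pos]

theorem cos_arcl_nonneg {p q : ℝ} (hpq : p < q) (hl : arcl X p q ≤ clen X / 2) :
    0 ≤ Real.cos (π * arcl X p q / clen X) := by
  have hL := hX.clen_pos
  refine Real.cos_nonneg_of_mem_Icc ⟨?_, ?_⟩
  · linarith [Real.pi_pos, div_pos (mul_pos Real.pi_pos (hX.arcl_pos hpq)) hL]
  · rw [div_le_iff₀ hL]
    nlinarith [Real.pi_pos]

end IsClosedCurve

/-- **First-derivative conditions at a spatial minimum of `d/ψ`.**
If `d/ψ` attains a local minimum at `(p,q)` with `p ≠ q` and `l(p,q) ≤ L/2`, then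
`⟨w, τ_p⟩ = ⟨w, τ_q⟩ = (d/ψ) cos(π l/L)`; if moreover `d/ψ < 1` at `(p,q)`, then
`⟨w, τ_p⟩ = ⟨w, τ_q⟩ = cos(β/2)` for some `β ∈ (0, π]` with `cos(β/2) ∈ [0,1)`. -/
theorem first_derivative_conditions_at_min
    (X : ℝ → E2) (hcc : IsClosedCurve X) (hemb : IsEmbedded X)
    (p q : ℝ) (hpq : p < q) (hq : q < p + 1)
    (hl : arcl X p q ≤ clen X / 2)
    (hmin : IsLocalMin (fun z : ℝ × ℝ => extd X z.1 z.2 / psi X z.1 z.2) (p, q)) :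
    ((inner ℝ (wvec X p q) (tvec X p) : ℝ)
        = extd X p q / psi X p q * Real.cos (π * arcl X p q / clen X) ∧
      (inner ℝ (wvec X p q) (tvec X q) : ℝ)
        = extd X p q / psi X p q * Real.cos (π * arcl X p q / clen X)) ∧
    (extd X p q / psi X p q < 1 →
      ∃ β ∈ Set.Ioc 0 π,
        (inner ℝ (wvec X p q) (tvec X p) : ℝ) = Real.cos (β / 2) ∧
        (inner ℝ (wvec X p q) (tvec X q) : ℝ) = Real.cos (β / 2) ∧
        Real.cos (β / 2) ∈ Set.Ico 0 1) := by
  have hψ := hcc.psi_pos hpq hl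
  have hne := hemb.apply_ne hpq hq
  have hmin_q : IsLocalMin (fun x => extd X p x / psi X p x) q :=
    hmin.comp_continuous (g := fun x => (p, x)) (b := q) (by fun_prop)
  have hmin_p : IsLocalMin (fun x => extd X x q / psi X x q) p :=
    hmin.comp_continuous (g := fun x => (x, q)) (b := p) (by fun_prop)
  have hwq := eq_div_mul_of_mul_mul_eq (hcc.lenElem_pos q).ne' hψ.ne' <|
    hmin_q.deriv_mul_eq_mul_deriv_of_div (hcc.hasDerivAt_extd_right hne)
      (hcc.hasDerivAt_psi_right p q) hψ.ne'
  have hwp := eq_div_mul_of_mul_mul_eq (neg_ne_zero.2 (hcc.lenElem_pos p).ne') hψ.ne' <|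
    hmin_p.deriv_mul_eq_mul_deriv_of_div (hcc.hasDerivAt_extd_left hne)
      (hcc.hasDerivAt_psi_left p q) hψ.ne'
  refine ⟨⟨hwp, hwq⟩, fun hlt => ?_⟩
  have hc : extd X p q / psi X p q * Real.cos (π * arcl X p q / clen X) ∈ Ico 0 1 := by
    have hratio : 0 < extd X p q / psi X p q :=
      div_pos (norm_pos_iff.2 (sub_ne_zero.2 hne)) hψ
    have hcos := hcc.cos_arcl_nonneg hpq hl
    refine ⟨by positivity, ?_⟩
    nlinarith [Real.cos_le_one (π * arcl X p q / clen X)]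
  obtain ⟨β, hβ, hcosβ⟩ := exists_mem_Ioc_cos_half_eq hc
  exact ⟨β, hβ, hwp.trans hcosβ.symm, hwq.trans hcosβ.symm, hcosβ ▸ hc⟩
end
end

section
/- Let L > 0, h ≥ 0, l ∈ (0, L/2], θ ∈ (0, π], r ∈ (0,1), and K > 4π²/L, and set x := π l/L ∈ (0, π/2]. Suppose cos(θ/2) = r·cos(x). Then 2h·(sin(θ/2) − (θ/2)·cos(θ/2) − r·(sin x − x·cos x)) + r·(K/π − 4π/L)·(sin x − x·cos x) > 0. (In particular, cos(θ/2) < cos(x) forces θ/2 > x, and the function y ↦ sin y − y·cos y is positive and strictly increasing on (0, π].) -/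
open Real

lemma f_strictMonoOn : StrictMonoOn (fun y : ℝ => Real.sin y - y * Real.cos y)
    (Set.Icc 0 π) := by
  apply strictMonoOn_of_deriv_pos (convex_Icc 0 π)
  · fun_prop
  · intro y hy
    rw [interior_Icc] at hy
    have : deriv (fun y : ℝ => Real.sin y - y * Real.cos y) y = y * Real.sin y := by
      have h1 : HasDerivAt (fun y : ℝ => Real.sin y - y * Real.cos y)
          (Real.cos y - (1 * Real.cos y + y * (-Real.sin y))) y :=
        (Real.hasDerivAt_sin y).sub ((hasDerivAt_id y).mul (Real.hasDerivAt_cos y))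
      rw [h1.deriv]; ring
    rw [this]
    exact mul_pos hy.1 (Real.sin_pos_of_pos_of_lt_pi hy.1 hy.2)

/-- **The final real-analytic inequality in case (i).**
For `L > 0`, `h ≥ 0`, `l ∈ (0, L/2]`, `θ ∈ (0, π]`, `r ∈ (0,1)`, `K > 4π²/L`, with
`x := πl/L` and `cos(θ/2) = r cos(x)`, we have
`2h(sin(θ/2) - (θ/2)cos(θ/2) - r(sin x - x cos x)) + r(K/π - 4π/L)(sin x - x cos x) > 0`. -/
theorem final_analytic_inequality
    (L h l θ r K : ℝ) (hL : 0 < L) (hh : 0 ≤ h)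
    (hl : l ∈ Set.Ioc 0 (L / 2)) (hθ : θ ∈ Set.Ioc 0 π)
    (hr : r ∈ Set.Ioo 0 1) (hK : 4 * π ^ 2 / L < K)
    (hcos : Real.cos (θ / 2) = r * Real.cos (π * l / L)) :
    0 < 2 * h * (Real.sin (θ / 2) - θ / 2 * Real.cos (θ / 2)
          - r * (Real.sin (π * l / L) - π * l / L * Real.cos (π * l / L)))
        + r * (K / π - 4 * π / L)
          * (Real.sin (π * l / L) - π * l / L * Real.cos (π * l / L)) := by
  have hpi := Real.pi_pos
  set x := π * l / L with hx
  have hx0 : 0 < x := by have := hl.1; positivity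
  have hx2 : x ≤ π / 2 := by
    rw [hx, div_le_div_iff₀ hL two_pos]
    nlinarith [hl.2, hpi]
  have hxpi : x ≤ π := hx2.trans (by linarith)
  have hθ2 : θ / 2 ∈ Set.Icc 0 π := ⟨by linarith [hθ.1], by linarith [hθ.2]⟩
  have hxmem : x ∈ Set.Icc 0 π := ⟨hx0.le, hxpi⟩
  have hcosx : 0 ≤ Real.cos x := Real.cos_nonneg_of_mem_Icc ⟨by linarith, hx2⟩
  -- θ/2 ≥ x
  have hge : x ≤ θ / 2 := by
    by_contra hlt
    push_neg at hlt
    have := Real.strictAntiOn_cos hθ2 hxmem hlt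
    nlinarith [hr.2, hr.1]
  -- f(x) > 0
  have hf0 : (fun y : ℝ => Real.sin y - y * Real.cos y) 0 = 0 := by simp
  have hfx : 0 < Real.sin x - x * Real.cos x := by
    have := f_strictMonoOn (Set.left_mem_Icc.mpr hpi.le) hxmem hx0
    simpa [hf0] using this
  -- f(θ/2) ≥ f(x)
  have hfmono : Real.sin x - x * Real.cos x ≤
      Real.sin (θ / 2) - θ / 2 * Real.cos (θ / 2) :=
    f_strictMonoOn.monotoneOn hxmem hθ2 hge
  have hfirst : 0 ≤ Real.sin (θ / 2) - θ / 2 * Real.cos (θ / 2)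
      - r * (Real.sin x - x * Real.cos x) := by nlinarith [hr.2.le]
  have hKpos : 0 < K / π - 4 * π / L := by
    rw [div_sub_div _ _ hpi.ne' hL.ne']
    have : 0 < K * L - π * (4 * π) := by
      have := (div_lt_iff₀ hL).mp hK
      nlinarith
    positivity
  have hsecond : 0 < r * (K / π - 4 * π / L) * (Real.sin x - x * Real.cos x) :=
    mul_pos (mul_pos hr.1 hKpos) hfx
  nlinarith [mul_nonneg (mul_nonneg (by norm_num : (0:ℝ) ≤ 2) hh) hfirst]
end
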